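/- arXiv:1704.08446 — 8 statements merged into one kernel-verified Lean document; each statement's English description precedes it below -/
import Mathlib

section
/- For a spherical triangle σ with side lengths a, b, c, determinant D = a·(b×c) > 0 (with vertices as unit vectors) and u = 1 + cos a + cos b + cos c, the area satisfies tan(|σ|/2) = D/u, where |σ| = A + B + C − π is the angular excess. -/
open Matrix Real Set

/-!
With `p, q, r` the cosines of the sides, `cos A = (p - q r) / (sin b' sin c')`, and the Gram
identity `(p - q r)² + D² = sin² b' sin² c'` gives `sin A = D / (sin b' sin c')`: `e^{iA}` is a
positive multiple of `(p - q r) + i D`. Multiplying the three such numbers and reducing modulo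
`D² = 1 - p² - q² - r² + 2 p q r` yields `e^{i(A + B + C - π)} = (u + i D)² / (u² + D²)`, so
`|σ| / 2` is an argument of `u + i D` modulo `π`, i.e. `tan (|σ|/2) = D / u`.
-/

open Complex (I)
open scoped Complex

section DotProduct

variable {n R : Type*} [Fintype n] [CommRing R]

theorem dotProduct_sub_smul_sub_smul {x : n → R} (hx : x ⬝ᵥ x = 1) (y z : n → R) :
    (y - (y ⬝ᵥ x) • x) ⬝ᵥ (z - (z ⬝ᵥ x) • x) = y ⬝ᵥ z - (y ⬝ᵥ x) * (z ⬝ᵥ x) := by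
  simp only [sub_dotProduct, dotProduct_sub, smul_dotProduct, dotProduct_smul, smul_eq_mul, hx,
    dotProduct_comm x]
  ring

theorem dotProduct_cross_sq (a b c : Fin 3 → R) :
    (a ⬝ᵥ b ⨯₃ c) ^ 2 = (a ⬝ᵥ a) * (b ⬝ᵥ b) * (c ⬝ᵥ c) + 2 * (a ⬝ᵥ b) * (b ⬝ᵥ c) * (c ⬝ᵥ a)
      - (a ⬝ᵥ a) * (b ⬝ᵥ c) ^ 2 - (b ⬝ᵥ b) * (c ⬝ᵥ a) ^ 2 - (c ⬝ᵥ c) * (a ⬝ᵥ b) ^ 2 := by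
  simp only [dotProduct, cross_apply, Fin.sum_univ_three, cons_val_zero, cons_val_one, cons_val]
  ring

end DotProduct

theorem one_sub_dotProduct_sq_pos {a b : Fin 3 → ℝ} (ha : a ⬝ᵥ a = 1) (hb : b ⬝ᵥ b = 1)
    {c : Fin 3 → ℝ} (hc : c ⬝ᵥ a ⨯₃ b ≠ 0) : 0 < 1 - (a ⬝ᵥ b) ^ 2 := by
  have hab : a ⨯₃ b ≠ 0 := by
    intro h
    exact hc (by rw [h, dotProduct_zero])
  calc (0 : ℝ) < a ⨯₃ b ⬝ᵥ a ⨯₃ b :=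
        (Finset.sum_nonneg fun i _ => mul_self_nonneg _).lt_of_ne'
          (dotProduct_self_eq_zero.not.mpr hab)
    _ = 1 - (a ⬝ᵥ b) ^ 2 := by rw [cross_dot_cross, ha, hb, dotProduct_comm b a]; ring

theorem Complex.exp_mul_I_eq_of_cos_eq_div {θ x y s : ℝ} (hθ : θ ∈ Icc 0 π) (hy : 0 ≤ y)
    (hs : 0 < s) (hxy : x ^ 2 + y ^ 2 = s ^ 2) (hcos : Real.cos θ = x / s) :
    cexp (θ * I) = (x + y * I) / s := by
  have hsin : Real.sin θ = y / s := by
    rw [Real.sin_eq_sqrt_one_sub_cos_sq hθ.1 hθ.2, hcos,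
      show 1 - (x / s) ^ 2 = (y / s) ^ 2 by field_simp; linarith,
      Real.sqrt_sq (div_nonneg hy hs.le)]
  rw [Complex.exp_ofReal_mul_I, hcos, hsin]
  push_cast
  ring

theorem Real.tan_half_eq_div_of_exp_mul_I {θ x y : ℝ} (hxy : x ^ 2 + y ^ 2 ≠ 0)
    (h : cexp (θ * I) * (x ^ 2 + y ^ 2 : ℝ) = (x + y * I) ^ 2) : tan (θ / 2) = y / x := by
  set s := √(x ^ 2 + y ^ 2)
  have hs : 0 < s := Real.sqrt_pos.2 (lt_of_le_of_ne (by positivity) hxy.symm)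
  have hsq : (cexp ((θ / 2 : ℝ) * I) * s) ^ 2 = (x + y * I) ^ 2 := by
    rw [mul_pow, ← Complex.exp_nat_mul, ← Complex.ofReal_pow, Real.sq_sqrt (by positivity), ← h]
    push_cast
    ring_nf
  rcases sq_eq_sq_iff_eq_or_eq_neg.1 hsq with h | h <;>
  · have hre := congrArg Complex.re h
    have him := congrArg Complex.im h
    simp only [Complex.exp_ofReal_mul_I_re, Complex.exp_ofReal_mul_I_im, Complex.mul_re,
      Complex.mul_im, Complex.add_re, Complex.add_im, Complex.neg_re, Complex.neg_im,
      Complex.ofReal_re, Complex.ofReal_im, Complex.I_re, Complex.I_im, mul_zero, mul_one,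
      sub_zero, sub_self, add_zero, zero_add] at hre him
    rw [tan_eq_sin_div_cos, ← mul_div_mul_right _ _ hs.ne']
    simp only [hre, him, neg_div_neg_eq]

theorem two_mul_prod_add_mul_I_eq {p q r D : ℂ} (hD : D ^ 2 = 1 - p ^ 2 - q ^ 2 - r ^ 2 + 2 * p * q * r) :
    2 * ((p - r * q + D * I) * (q - p * r + D * I) * (r - q * p + D * I)) =
      -((1 - p) * (1 - q) * (1 - r) * (1 + p + q + r + D * I) ^ 2) := by
  linear_combination
    (-(2 * ((p - r * q) + (q - p * r) + (r - q * p)) + (1 - p) * (1 - q) * (1 - r)) - 2 * D * I) * hD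
    + (2 * D ^ 2 * ((p - r * q) + (q - p * r) + (r - q * p)) + 2 * D ^ 3 * I
      + (1 - p) * (1 - q) * (1 - r) * D ^ 2) * Complex.I_sq

theorem tan_half_angle_excess {p q r D A B C : ℝ} (hp : p ^ 2 < 1) (hq : q ^ 2 < 1) (hr : r ^ 2 < 1)
    (hD : D ^ 2 = 1 - p ^ 2 - q ^ 2 - r ^ 2 + 2 * p * q * r)
    (hA : cexp (A * I) = (↑(p - r * q) + D * I) / ↑(√(1 - r ^ 2) * √(1 - q ^ 2)))
    (hB : cexp (B * I) = (↑(q - p * r) + D * I) / ↑(√(1 - p ^ 2) * √(1 - r ^ 2)))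
    (hC : cexp (C * I) = (↑(r - q * p) + D * I) / ↑(√(1 - q ^ 2) * √(1 - p ^ 2))) :
    tan ((A + B + C - π) / 2) = D / (1 + p + q + r) := by
  have h1p : 0 < 1 + p := by nlinarith
  have h1q : 0 < 1 + q := by nlinarith
  have h1r : 0 < 1 + r := by nlinarith
  have hN : (1 + p + q + r) ^ 2 + D ^ 2 = 2 * (1 + p) * (1 + q) * (1 + r) := by
    linear_combination hD
  have hden : (√(1 - r ^ 2) * √(1 - q ^ 2)) * (√(1 - p ^ 2) * √(1 - r ^ 2)) *
      (√(1 - q ^ 2) * √(1 - p ^ 2)) = (1 - p ^ 2) * (1 - q ^ 2) * (1 - r ^ 2) := by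
    have hsp := Real.sq_sqrt (by linarith : 0 ≤ 1 - p ^ 2)
    have hsq := Real.sq_sqrt (by linarith : 0 ≤ 1 - q ^ 2)
    have hsr := Real.sq_sqrt (by linarith : 0 ≤ 1 - r ^ 2)
    linear_combination √(1 - q ^ 2) ^ 2 * √(1 - r ^ 2) ^ 2 * hsp
      + (1 - p ^ 2) * √(1 - r ^ 2) ^ 2 * hsq + (1 - p ^ 2) * (1 - q ^ 2) * hsr
  apply Real.tan_half_eq_div_of_exp_mul_I (by rw [hN]; positivity)
  have hexp : cexp (↑(A + B + C - π) * I) = -(cexp (A * I) * cexp (B * I) * cexp (C * I)) := by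
    push_cast
    rw [sub_mul, add_mul, add_mul, Complex.exp_sub, Complex.exp_add, Complex.exp_add,
      Complex.exp_pi_mul_I, div_neg, div_one]
  rw [hexp, hA, hB, hC, div_mul_div_comm, div_mul_div_comm, ← Complex.ofReal_mul,
    ← Complex.ofReal_mul, hden, hN]
  have key := two_mul_prod_add_mul_I_eq (p := p) (q := q) (r := r) (D := D) (by exact_mod_cast hD)
  have hP : (0 : ℝ) < (1 - p ^ 2) * (1 - q ^ 2) * (1 - r ^ 2) := by
    apply mul_pos (mul_pos _ _) <;> linarith
  rw [neg_mul, div_mul_eq_mul_div, ← neg_div, div_eq_iff (Complex.ofReal_ne_zero.2 hP.ne')]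
  push_cast
  linear_combination (-((1 + p) * (1 + q) * (1 + r) : ℂ)) * key

theorem exp_mul_I_of_spherical_cos {a b c : Fin 3 → ℝ} (ha : a ⬝ᵥ a = 1) (hb : b ⬝ᵥ b = 1)
    (hc : c ⬝ᵥ c = 1) (hD : 0 < a ⬝ᵥ b ⨯₃ c) {A : ℝ} (hA : A ∈ Icc 0 π)
    (hcosA : Real.cos A = ((b - (b ⬝ᵥ a) • a) ⬝ᵥ (c - (c ⬝ᵥ a) • a)) /
      (√((b - (b ⬝ᵥ a) • a) ⬝ᵥ (b - (b ⬝ᵥ a) • a)) * √((c - (c ⬝ᵥ a) • a) ⬝ᵥ (c - (c ⬝ᵥ a) • a)))) :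
    cexp (A * I) = (↑(b ⬝ᵥ c - (b ⬝ᵥ a) * (c ⬝ᵥ a)) + ↑(a ⬝ᵥ b ⨯₃ c) * I) /
      ↑(√(1 - (b ⬝ᵥ a) ^ 2) * √(1 - (c ⬝ᵥ a) ^ 2)) := by
  simp only [dotProduct_sub_smul_sub_smul ha, hb, hc, ← sq] at hcosA
  have hba : 0 < 1 - (b ⬝ᵥ a) ^ 2 := one_sub_dotProduct_sq_pos hb ha (c := c) (by
    rw [← cross_anticomm, dotProduct_neg, triple_product_permutation c, neg_ne_zero]
    exact hD.ne')
  have hca : 0 < 1 - (c ⬝ᵥ a) ^ 2 := one_sub_dotProduct_sq_pos hc ha (c := b) (by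
    rw [← triple_product_permutation a]
    exact hD.ne')
  refine Complex.exp_mul_I_eq_of_cos_eq_div hA hD.le (by positivity) ?_ hcosA
  rw [mul_pow, Real.sq_sqrt hba.le, Real.sq_sqrt hca.le, dotProduct_cross_sq, ha, hb, hc]
  rw [dotProduct_comm b a, dotProduct_comm c a]
  ring

theorem spherical_area_tan_half_general
    (a b c : Fin 3 → ℝ)
    (ha : a ⬝ᵥ a = 1) (hb : b ⬝ᵥ b = 1) (hc : c ⬝ᵥ c = 1)
    (D : ℝ) (hD : D = a ⬝ᵥ (b ⨯₃ c)) (hDpos : 0 < D)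
    (a' b' c' A B C u : ℝ)
    (hcosa' : Real.cos a' = b ⬝ᵥ c)
    (hcosb' : Real.cos b' = a ⬝ᵥ c)
    (hcosc' : Real.cos c' = a ⬝ᵥ b)
    (hu : u = 1 + Real.cos a' + Real.cos b' + Real.cos c')
    (hA : A ∈ Icc (0:ℝ) π) (hB : B ∈ Icc (0:ℝ) π) (hC : C ∈ Icc (0:ℝ) π)
    (hcosA : Real.cos A =
      ((b - (b ⬝ᵥ a) • a) ⬝ᵥ (c - (c ⬝ᵥ a) • a)) /
        (Real.sqrt ((b - (b ⬝ᵥ a) • a) ⬝ᵥ (b - (b ⬝ᵥ a) • a)) *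
          Real.sqrt ((c - (c ⬝ᵥ a) • a) ⬝ᵥ (c - (c ⬝ᵥ a) • a))))
    (hcosB : Real.cos B =
      ((c - (c ⬝ᵥ b) • b) ⬝ᵥ (a - (a ⬝ᵥ b) • b)) /
        (Real.sqrt ((c - (c ⬝ᵥ b) • b) ⬝ᵥ (c - (c ⬝ᵥ b) • b)) *
          Real.sqrt ((a - (a ⬝ᵥ b) • b) ⬝ᵥ (a - (a ⬝ᵥ b) • b))))
    (hcosC : Real.cos C =
      ((a - (a ⬝ᵥ c) • c) ⬝ᵥ (b - (b ⬝ᵥ c) • c)) /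
        (Real.sqrt ((a - (a ⬝ᵥ c) • c) ⬝ᵥ (a - (a ⬝ᵥ c) • c)) *
          Real.sqrt ((b - (b ⬝ᵥ c) • c) ⬝ᵥ (b - (b ⬝ᵥ c) • c)))) :
    Real.tan ((A + B + C - π) / 2) = D / u := by
  subst hD hu
  have hDb : 0 < b ⬝ᵥ c ⨯₃ a := by rwa [← triple_product_permutation]
  have hDc : 0 < c ⬝ᵥ a ⨯₃ b := by rwa [← triple_product_permutation, ← triple_product_permutation]
  have hp : (b ⬝ᵥ c) ^ 2 < 1 := by linarith [one_sub_dotProduct_sq_pos hb hc hDpos.ne']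
  have hq : (a ⬝ᵥ c) ^ 2 < 1 := by
    rw [dotProduct_comm]; linarith [one_sub_dotProduct_sq_pos hc ha hDb.ne']
  have hr : (a ⬝ᵥ b) ^ 2 < 1 := by linarith [one_sub_dotProduct_sq_pos ha hb hDc.ne']
  have hGram := dotProduct_cross_sq a b c
  rw [ha, hb, hc, dotProduct_comm c a] at hGram
  have hexpA := exp_mul_I_of_spherical_cos ha hb hc hDpos hA hcosA
  have hexpB := exp_mul_I_of_spherical_cos hb hc ha hDb hB hcosB
  have hexpC := exp_mul_I_of_spherical_cos hc ha hb hDc hC hcosC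
  rw [← triple_product_permutation] at hexpB
  rw [← triple_product_permutation, ← triple_product_permutation] at hexpC
  rw [dotProduct_comm b a, dotProduct_comm c a] at hexpA
  rw [dotProduct_comm c a, dotProduct_comm c b] at hexpB
  rw [hcosa', hcosb', hcosc']
  exact tan_half_angle_excess hp hq hr (by linear_combination hGram) hexpA hexpB hexpC

/-- Area formula of SSS type: for a spherical triangle with vertices the unit
vectors `a b c`, determinant `D = a ⬝ (b ×₃ c) > 0`, side lengths `a', b', c'`,
spherical angles `A, B, C`, area `|σ| = A + B + C - π` and
`u = 1 + cos a' + cos b' + cos c'`, one has `tan (|σ|/2) = D / u`. -/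
theorem spherical_area_tan_half
    (a b c : Fin 3 → ℝ)
    (ha : a ⬝ᵥ a = 1) (hb : b ⬝ᵥ b = 1) (hc : c ⬝ᵥ c = 1)
    (D : ℝ) (hD : D = a ⬝ᵥ (b ⨯₃ c)) (hDpos : 0 < D)
    (a' b' c' A B C u : ℝ)
    (ha' : a' ∈ Icc (0:ℝ) π) (hb' : b' ∈ Icc (0:ℝ) π) (hc' : c' ∈ Icc (0:ℝ) π)
    (hcosa' : Real.cos a' = b ⬝ᵥ c)
    (hcosb' : Real.cos b' = a ⬝ᵥ c)
    (hcosc' : Real.cos c' = a ⬝ᵥ b)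
    (hu : u = 1 + Real.cos a' + Real.cos b' + Real.cos c')
    (hA : A ∈ Icc (0:ℝ) π) (hB : B ∈ Icc (0:ℝ) π) (hC : C ∈ Icc (0:ℝ) π)
    (hcosA : Real.cos A =
      ((b - (b ⬝ᵥ a) • a) ⬝ᵥ (c - (c ⬝ᵥ a) • a)) /
        (Real.sqrt ((b - (b ⬝ᵥ a) • a) ⬝ᵥ (b - (b ⬝ᵥ a) • a)) *
          Real.sqrt ((c - (c ⬝ᵥ a) • a) ⬝ᵥ (c - (c ⬝ᵥ a) • a))))
    (hcosB : Real.cos B =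
      ((c - (c ⬝ᵥ b) • b) ⬝ᵥ (a - (a ⬝ᵥ b) • b)) /
        (Real.sqrt ((c - (c ⬝ᵥ b) • b) ⬝ᵥ (c - (c ⬝ᵥ b) • b)) *
          Real.sqrt ((a - (a ⬝ᵥ b) • b) ⬝ᵥ (a - (a ⬝ᵥ b) • b))))
    (hcosC : Real.cos C =
      ((a - (a ⬝ᵥ c) • c) ⬝ᵥ (b - (b ⬝ᵥ c) • c)) /
        (Real.sqrt ((a - (a ⬝ᵥ c) • c) ⬝ᵥ (a - (a ⬝ᵥ c) • c)) *
          Real.sqrt ((b - (b ⬝ᵥ c) • c) ⬝ᵥ (b - (b ⬝ᵥ c) • c)))) :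
    Real.tan ((A + B + C - π) / 2) = D / u :=
  spherical_area_tan_half_general a b c ha hb hc D hD hDpos a' b' c' A B C u hcosa' hcosb' hcosc' hu
    hA hB hC hcosA hcosB hcosC
end

section
/- For a spherical right triangle with right angle at C, the area satisfies tan(|σ|/2) = tan(a/2) · tan(b/2), where a, b are the legs and |σ| = A + B + C − π is the area. -/
open Real Set

set_option maxHeartbeats 1000000 in
/-- Area formula for a spherical right triangle: with right angle at `C`,
legs `a, b`, and area `|σ| = A + B + C - π`,
`tan (|σ|/2) = tan (a/2) * tan (b/2)`. -/
theorem spherical_right_triangle_area_tan_half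
    (a b c A B C : ℝ)
    (ha : a ∈ Ioo 0 π) (hb : b ∈ Ioo 0 π) (hc : c ∈ Ioo 0 π)
    (hA : A ∈ Ioo 0 π) (hB : B ∈ Ioo 0 π) (hC : C ∈ Ioo 0 π)
    (lawA : Real.cos a = Real.cos b * Real.cos c + Real.sin b * Real.sin c * Real.cos A)
    (lawB : Real.cos b = Real.cos a * Real.cos c + Real.sin a * Real.sin c * Real.cos B)
    (lawC : Real.cos c = Real.cos a * Real.cos b + Real.sin a * Real.sin b * Real.cos C)
    (hright : C = π / 2) :
    Real.tan ((A + B + C - π) / 2) = Real.tan (a / 2) * Real.tan (b / 2) := by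
  obtain ⟨ha0, haπ⟩ := ha
  obtain ⟨hb0, hbπ⟩ := hb
  obtain ⟨hc0, hcπ⟩ := hc
  obtain ⟨hA0, hAπ⟩ := hA
  obtain ⟨hB0, hBπ⟩ := hB
  have hsa : 0 < Real.sin a := Real.sin_pos_of_pos_of_lt_pi ha0 haπ
  have hsb : 0 < Real.sin b := Real.sin_pos_of_pos_of_lt_pi hb0 hbπ
  have hsc : 0 < Real.sin c := Real.sin_pos_of_pos_of_lt_pi hc0 hcπ
  have hsA : 0 < Real.sin A := Real.sin_pos_of_pos_of_lt_pi hA0 hAπ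
  have hsB : 0 < Real.sin B := Real.sin_pos_of_pos_of_lt_pi hB0 hBπ
  have pa := Real.sin_sq_add_cos_sq a
  have pb := Real.sin_sq_add_cos_sq b
  have pc := Real.sin_sq_add_cos_sq c
  have pA := Real.sin_sq_add_cos_sq A
  have pB := Real.sin_sq_add_cos_sq B
  -- cos c = cos a * cos b
  have hcc : Real.cos c = Real.cos a * Real.cos b := by
    rw [hright, Real.cos_pi_div_two] at lawC; linarith [lawC]
  -- sin c * cos A = cos a * sin b
  have hscA : Real.sin c * Real.cos A = Real.cos a * Real.sin b := by
    have h : Real.sin b * (Real.sin c * Real.cos A) = Real.sin b * (Real.cos a * Real.sin b) := by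
      rw [hcc] at lawA
      linear_combination -lawA - Real.cos a * pb
    exact mul_left_cancel₀ (ne_of_gt hsb) h
  -- sin c * cos B = cos b * sin a
  have hscB : Real.sin c * Real.cos B = Real.cos b * Real.sin a := by
    have h : Real.sin a * (Real.sin c * Real.cos B) = Real.sin a * (Real.cos b * Real.sin a) := by
      rw [hcc] at lawB
      linear_combination -lawB - Real.cos b * pa
    exact mul_left_cancel₀ (ne_of_gt hsa) h
  -- sin c ^ 2 = 1 - (cos a * cos b) ^ 2
  have hsc2 : Real.sin c ^ 2 = 1 - (Real.cos a * Real.cos b) ^ 2 := by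
    rw [← hcc]; linarith [pc]
  -- sin c * sin A = sin a
  have hsnA : Real.sin c * Real.sin A = Real.sin a := by
    have h2 : (Real.sin c * Real.sin A) ^ 2 = Real.sin a ^ 2 := by
      linear_combination Real.sin c ^ 2 * pA
        - (Real.sin c * Real.cos A + Real.cos a * Real.sin b) * hscA
        + hsc2 - Real.cos a ^ 2 * pb - pa
    exact (sq_eq_sq₀ (by positivity) hsa.le).mp h2
  have hsnB : Real.sin c * Real.sin B = Real.sin b := by
    have h2 : (Real.sin c * Real.sin B) ^ 2 = Real.sin b ^ 2 := by
      linear_combination Real.sin c ^ 2 * pB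
        - (Real.sin c * Real.cos B + Real.cos b * Real.sin a) * hscB
        + hsc2 - Real.cos b ^ 2 * pa - pb
    exact (sq_eq_sq₀ (by positivity) hsb.le).mp h2
  -- bounds on cosines
  have hca1 : Real.cos a < 1 := by
    have := Real.cos_lt_cos_of_nonneg_of_le_pi le_rfl haπ.le ha0
    simpa using this
  have hca2 : -1 < Real.cos a := by
    have := Real.cos_lt_cos_of_nonneg_of_le_pi ha0.le le_rfl haπ
    simpa using this
  have hcb1 : Real.cos b < 1 := by
    have := Real.cos_lt_cos_of_nonneg_of_le_pi le_rfl hbπ.le hb0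
    simpa using this
  have hcb2 : -1 < Real.cos b := by
    have := Real.cos_lt_cos_of_nonneg_of_le_pi hb0.le le_rfl hbπ
    simpa using this
  have hprod : Real.cos a * Real.cos b < 1 := by
    nlinarith [mul_pos (show (0:ℝ) < 1 - Real.cos a by linarith) (show (0:ℝ) < 1 + Real.cos b by linarith),
      mul_pos (show (0:ℝ) < 1 + Real.cos a by linarith) (show (0:ℝ) < 1 - Real.cos b by linarith)]
  -- the half-excess angle
  set x : ℝ := A + B + C - π with hx
  have hxval : x = A + B - π / 2 := by rw [hx, hright]; ring
  -- cos x and sin x in terms of A+B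
  have hcosx : Real.cos x = Real.sin A * Real.cos B + Real.cos A * Real.sin B := by
    rw [hxval, Real.cos_sub, Real.cos_pi_div_two, Real.sin_pi_div_two, Real.sin_add]; ring
  have hsinx : Real.sin x = Real.sin A * Real.sin B - Real.cos A * Real.cos B := by
    rw [hxval, Real.sin_sub, Real.cos_pi_div_two, Real.sin_pi_div_two, Real.cos_add]; ring
  -- key product identities (multiplied through by sin c ^ 2)
  have e1 : (1 + Real.cos x) * Real.sin c ^ 2
      = (1 - Real.cos a * Real.cos b) * (1 + Real.cos a) * (1 + Real.cos b) := by
    rw [hcosx]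
    have t1 : (Real.sin A * Real.cos B) * Real.sin c ^ 2
        = Real.sin a * (Real.cos b * Real.sin a) := by
      rw [show (Real.sin A * Real.cos B) * Real.sin c ^ 2
          = (Real.sin c * Real.sin A) * (Real.sin c * Real.cos B) by ring, hsnA, hscB]
    have t2 : (Real.cos A * Real.sin B) * Real.sin c ^ 2
        = (Real.cos a * Real.sin b) * Real.sin b := by
      rw [show (Real.cos A * Real.sin B) * Real.sin c ^ 2
          = (Real.sin c * Real.cos A) * (Real.sin c * Real.sin B) by ring, hscA, hsnB]
    linear_combination t1 + t2 + hsc2 + Real.cos b * pa + Real.cos a * pb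
  have e2 : Real.sin x * Real.sin c ^ 2
      = Real.sin a * Real.sin b * (1 - Real.cos a * Real.cos b) := by
    rw [hsinx]
    have t1 : (Real.sin A * Real.sin B) * Real.sin c ^ 2 = Real.sin a * Real.sin b := by
      rw [show (Real.sin A * Real.sin B) * Real.sin c ^ 2
          = (Real.sin c * Real.sin A) * (Real.sin c * Real.sin B) by ring, hsnA, hsnB]
    have t2 : (Real.cos A * Real.cos B) * Real.sin c ^ 2
        = (Real.cos a * Real.sin b) * (Real.cos b * Real.sin a) := by
      rw [show (Real.cos A * Real.cos B) * Real.sin c ^ 2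
          = (Real.sin c * Real.cos A) * (Real.sin c * Real.cos B) by ring, hscA, hscB]
    linear_combination t1 - t2
  -- half angle facts for x
  have hsin2 : Real.sin x = 2 * Real.sin (x / 2) * Real.cos (x / 2) := by
    rw [← Real.sin_two_mul]; ring_nf
  have hcos2 : Real.cos x = 2 * Real.cos (x / 2) ^ 2 - 1 := by
    rw [← Real.cos_two_mul]; ring_nf
  have hKpos : 0 < (1 - Real.cos a * Real.cos b) * (1 + Real.cos a) * (1 + Real.cos b) := by
    apply mul_pos (mul_pos (by linarith) (by linarith)) (by linarith)
  have hcoshalf2 : 2 * Real.cos (x / 2) ^ 2 * Real.sin c ^ 2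
      = (1 - Real.cos a * Real.cos b) * (1 + Real.cos a) * (1 + Real.cos b) := by
    rw [← e1, hcos2]; ring
  have hch : Real.cos (x / 2) ≠ 0 := by
    intro h
    have h0 : (0:ℝ) = (1 - Real.cos a * Real.cos b) * (1 + Real.cos a) * (1 + Real.cos b) := by
      rw [← hcoshalf2, h]; ring
    linarith [hKpos, h0]
  -- main identity
  have hmain : Real.sin (x / 2) * ((1 + Real.cos a) * (1 + Real.cos b))
      = Real.sin a * Real.sin b * Real.cos (x / 2) := by
    have hM : (2 * Real.cos (x / 2) * Real.sin c ^ 2) ≠ 0 :=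
      mul_ne_zero (mul_ne_zero two_ne_zero hch) (pow_ne_zero 2 (ne_of_gt hsc))
    apply mul_right_cancel₀ hM
    calc Real.sin (x / 2) * ((1 + Real.cos a) * (1 + Real.cos b))
          * (2 * Real.cos (x / 2) * Real.sin c ^ 2)
        = (Real.sin x * Real.sin c ^ 2) * ((1 + Real.cos a) * (1 + Real.cos b)) := by
          rw [hsin2]; ring
      _ = Real.sin a * Real.sin b
          * ((1 - Real.cos a * Real.cos b) * (1 + Real.cos a) * (1 + Real.cos b)) := by
          rw [e2]; ring
      _ = Real.sin a * Real.sin b * (2 * Real.cos (x / 2) ^ 2 * Real.sin c ^ 2) := by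
          rw [hcoshalf2]
      _ = Real.sin a * Real.sin b * Real.cos (x / 2)
          * (2 * Real.cos (x / 2) * Real.sin c ^ 2) := by ring
  -- half angle facts for a and b
  have hcha : 0 < Real.cos (a / 2) :=
    Real.cos_pos_of_mem_Ioo ⟨by linarith [Real.pi_pos], by linarith⟩
  have hchb : 0 < Real.cos (b / 2) :=
    Real.cos_pos_of_mem_Ioo ⟨by linarith [Real.pi_pos], by linarith⟩
  have hta : Real.tan (a / 2) = Real.sin a / (1 + Real.cos a) := by
    rw [Real.tan_eq_sin_div_cos]
    rw [show Real.sin a = 2 * Real.sin (a / 2) * Real.cos (a / 2) by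
      rw [← Real.sin_two_mul]; ring_nf]
    rw [show Real.cos a = 2 * Real.cos (a / 2) ^ 2 - 1 by rw [← Real.cos_two_mul]; ring_nf]
    field_simp
    ring
  have htb : Real.tan (b / 2) = Real.sin b / (1 + Real.cos b) := by
    rw [Real.tan_eq_sin_div_cos]
    rw [show Real.sin b = 2 * Real.sin (b / 2) * Real.cos (b / 2) by
      rw [← Real.sin_two_mul]; ring_nf]
    rw [show Real.cos b = 2 * Real.cos (b / 2) ^ 2 - 1 by rw [← Real.cos_two_mul]; ring_nf]
    field_simp
    ring
  rw [show (A + B + C - π) / 2 = x / 2 by rw [hx], Real.tan_eq_sin_div_cos, hta, htb]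
  rw [div_mul_div_comm]
  rw [div_eq_div_iff hch (mul_pos (show (0:ℝ) < 1 + Real.cos a by linarith)
    (show (0:ℝ) < 1 + Real.cos b by linarith)).ne']
  linear_combination hmain
end

section
/- For a spherical right triangle with right angle at C, sin|σ| = (sin a · sin b)/(1 + cos c) and cos|σ| = (cos a + cos b)/(1 + cos c), where |σ| is the area. -/
open Real Set

/-- For a spherical right triangle with right angle at `C`, the area
`|σ| = A + B + C - π` satisfies `sin |σ| = sin a * sin b / (1 + cos c)` and
`cos |σ| = (cos a + cos b) / (1 + cos c)`. -/
theorem spherical_right_triangle_sin_cos_area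
    (a b c A B C : ℝ)
    (ha : a ∈ Ioo 0 π) (hb : b ∈ Ioo 0 π) (hc : c ∈ Ioo 0 π)
    (hA : A ∈ Ioo 0 π) (hB : B ∈ Ioo 0 π) (hC : C ∈ Ioo 0 π)
    (lawA : Real.cos a = Real.cos b * Real.cos c + Real.sin b * Real.sin c * Real.cos A)
    (lawB : Real.cos b = Real.cos a * Real.cos c + Real.sin a * Real.sin c * Real.cos B)
    (lawC : Real.cos c = Real.cos a * Real.cos b + Real.sin a * Real.sin b * Real.cos C)
    (hright : C = π / 2) :
    Real.sin (A + B + C - π) = Real.sin a * Real.sin b / (1 + Real.cos c) ∧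
    Real.cos (A + B + C - π) = (Real.cos a + Real.cos b) / (1 + Real.cos c) := by
  have hsa : 0 < Real.sin a := Real.sin_pos_of_pos_of_lt_pi ha.1 ha.2
  have hsb : 0 < Real.sin b := Real.sin_pos_of_pos_of_lt_pi hb.1 hb.2
  have hsc : 0 < Real.sin c := Real.sin_pos_of_pos_of_lt_pi hc.1 hc.2
  have hsA : 0 ≤ Real.sin A := le_of_lt (Real.sin_pos_of_pos_of_lt_pi hA.1 hA.2)
  have hsB : 0 ≤ Real.sin B := le_of_lt (Real.sin_pos_of_pos_of_lt_pi hB.1 hB.2)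
  have hcc : -1 < Real.cos c := by
    have := Real.cos_lt_cos_of_nonneg_of_le_pi (le_of_lt hc.1) le_rfl hc.2
    simpa using this
  have hcC : Real.cos C = 0 := by rw [hright]; exact Real.cos_pi_div_two
  have hpyth : Real.cos c = Real.cos a * Real.cos b := by rw [lawC, hcC]; ring
  have pa := Real.sin_sq_add_cos_sq a
  have pb := Real.sin_sq_add_cos_sq b
  have pc := Real.sin_sq_add_cos_sq c
  have pA := Real.sin_sq_add_cos_sq A
  have pB := Real.sin_sq_add_cos_sq B
  have hAeq : Real.cos A * Real.sin c = Real.cos a * Real.sin b := by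
    have h : Real.sin b * (Real.cos A * Real.sin c) = Real.sin b * (Real.cos a * Real.sin b) := by
      linear_combination -lawA - Real.cos a * pb - Real.cos b * hpyth
    exact mul_left_cancel₀ hsb.ne' h
  have hBeq : Real.cos B * Real.sin c = Real.cos b * Real.sin a := by
    have h : Real.sin a * (Real.cos B * Real.sin c) = Real.sin a * (Real.cos b * Real.sin a) := by
      linear_combination -lawB - Real.cos b * pa - Real.cos a * hpyth
    exact mul_left_cancel₀ hsa.ne' h
  have hAs : Real.sin A * Real.sin c = Real.sin a := by
    have hsq : (Real.sin A * Real.sin c) ^ 2 = Real.sin a ^ 2 := by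
      linear_combination Real.sin c ^ 2 * pA -
        (Real.cos A * Real.sin c + Real.cos a * Real.sin b) * hAeq - pa + pc -
        Real.cos a ^ 2 * pb - (Real.cos c + Real.cos a * Real.cos b) * hpyth
    have hx : 0 ≤ Real.sin A * Real.sin c := mul_nonneg hsA hsc.le
    have h0 : (Real.sin A * Real.sin c - Real.sin a) * (Real.sin A * Real.sin c + Real.sin a) = 0 := by
      linear_combination hsq
    rcases mul_eq_zero.mp h0 with h | h
    · linarith
    · linarith
  have hBs : Real.sin B * Real.sin c = Real.sin b := by
    have hsq : (Real.sin B * Real.sin c) ^ 2 = Real.sin b ^ 2 := by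
      linear_combination Real.sin c ^ 2 * pB -
        (Real.cos B * Real.sin c + Real.cos b * Real.sin a) * hBeq - pb + pc -
        Real.cos b ^ 2 * pa - (Real.cos c + Real.cos a * Real.cos b) * hpyth
    have hx : 0 ≤ Real.sin B * Real.sin c := mul_nonneg hsB hsc.le
    have h0 : (Real.sin B * Real.sin c - Real.sin b) * (Real.sin B * Real.sin c + Real.sin b) = 0 := by
      linear_combination hsq
    rcases mul_eq_zero.mp h0 with h | h
    · linarith
    · linarith
  have key : A + B + C - π = (A + B) - π / 2 := by rw [hright]; ring
  have h1c : (0:ℝ) < 1 + Real.cos c := by linarith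
  rw [key, Real.sin_sub, Real.cos_sub, Real.cos_pi_div_two, Real.sin_pi_div_two,
    Real.cos_add, Real.sin_add]
  constructor
  · rw [eq_div_iff h1c.ne']
    apply mul_right_cancel₀ (pow_ne_zero 2 hsc.ne')
    linear_combination (-(Real.sin a * Real.sin b)) * pc +
      Real.sin a * Real.sin b * (1 + Real.cos c) * hpyth +
      (1 + Real.cos c) * Real.sin B * Real.sin c * hAs +
      (1 + Real.cos c) * Real.sin a * hBs -
      (1 + Real.cos c) * Real.cos B * Real.sin c * hAeq -
      (1 + Real.cos c) * Real.cos a * Real.sin b * hBeq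
  · rw [eq_div_iff h1c.ne']
    apply mul_right_cancel₀ (pow_ne_zero 2 hsc.ne')
    linear_combination (-(Real.cos a + Real.cos b)) * pc +
      (Real.cos a + Real.cos b) * (1 + Real.cos c) * hpyth +
      (1 + Real.cos c) * Real.cos b * pa + (1 + Real.cos c) * Real.cos a * pb +
      (1 + Real.cos c) * Real.cos B * Real.sin c * hAs +
      (1 + Real.cos c) * Real.sin a * hBeq +
      (1 + Real.cos c) * Real.sin B * Real.sin c * hAeq +
      (1 + Real.cos c) * Real.cos a * Real.sin b * hBs
end

section
/- For a spherical triangle with sides a, b and included angle C, the area satisfies tan(|σ|/2) = sin C / (cot(a/2)·cot(b/2) + cos C). -/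
/-!
Write `x, y, z` for the cosines of the sides and `m = sin a sin b sin C`. By the cosine rules and
the law of sines, `sin b sin c · e^{iA} = (x - yz) + i m`, and cyclically for `B` and `C`. Multiplying
the three and using `m² = 1 - x² - y² - z² + 2xyz` gives
`(1 + cos (A + B + C)) (1 + x)(1 + y)(1 + z) = m²` and
`sin (A + B + C) (1 + x)(1 + y)(1 + z) = -(1 + x + y + z) m`, hence
`tan (σ / 2) = (1 - cos σ) / sin σ = m / (1 + x + y + z)` without any sign analysis of `σ`.
Finally `1 + x + y + z = (1 + x)(1 + y) + sin a sin b cos C` by the cosine rule for `c`, and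
`(1 + cos a) / sin a = cot (a / 2)`.
-/

open Real Set

-- Both half-angle formulas hold for every `θ`: where a denominator vanishes, both sides are `0`.
theorem Real.tan_half_eq_one_sub_cos_div_sin (θ : ℝ) : tan (θ / 2) = (1 - cos θ) / sin θ := by
  obtain ⟨t, rfl⟩ : ∃ t, θ = 2 * t := ⟨θ / 2, by ring⟩
  have h₁ : 1 - cos (2 * t) = sin t * (2 * sin t) := by rw [cos_two_mul, cos_sq']; ring
  have h₂ : sin (2 * t) = cos t * (2 * sin t) := by rw [sin_two_mul]; ring
  rw [mul_div_cancel_left₀ t two_ne_zero, tan_eq_sin_div_cos, h₁, h₂]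
  rcases eq_or_ne (sin t) 0 with h | h
  · simp [h]
  · rw [mul_div_mul_right _ _ (mul_ne_zero two_ne_zero h)]

theorem Real.cot_half_eq_one_add_cos_div_sin (θ : ℝ) : cot (θ / 2) = (1 + cos θ) / sin θ := by
  obtain ⟨t, rfl⟩ : ∃ t, θ = 2 * t := ⟨θ / 2, by ring⟩
  have h₁ : 1 + cos (2 * t) = cos t * (2 * cos t) := by rw [cos_two_mul]; ring
  have h₂ : sin (2 * t) = sin t * (2 * cos t) := by rw [sin_two_mul]; ring
  rw [mul_div_cancel_left₀ t two_ne_zero, cot_eq_cos_div_sin, h₁, h₂]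
  rcases eq_or_ne (cos t) 0 with h | h
  · simp [h]
  · rw [mul_div_mul_right _ _ (mul_ne_zero two_ne_zero h)]

theorem abs_cos_lt_one_of_mem_Ioo {x : ℝ} (hx : x ∈ Ioo 0 π) : |cos x| < 1 := by
  rw [← sq_lt_one_iff_abs_lt_one, cos_sq']
  linarith [pow_pos (sin_pos_of_mem_Ioo hx) 2]

theorem sin_mul_sin_mul_sin_pos {x y z : ℝ} (hx : x ∈ Ioo 0 π) (hy : y ∈ Ioo 0 π)
    (hz : z ∈ Ioo 0 π) : 0 < sin x * sin y * sin z :=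
  mul_pos (mul_pos (sin_pos_of_mem_Ioo hx) (sin_pos_of_mem_Ioo hy)) (sin_pos_of_mem_Ioo hz)

theorem sq_sin_mul_sin_mul_sin_of_cos_eq {a b c A : ℝ}
    (h : cos a = cos b * cos c + sin b * sin c * cos A) :
    (sin b * sin c * sin A) ^ 2 =
      1 - cos a ^ 2 - cos b ^ 2 - cos c ^ 2 + 2 * cos a * cos b * cos c := by
  linear_combination (sin b * sin c) ^ 2 * sin_sq A
    + (sin b * sin c * cos A + cos a - cos b * cos c) * h
    + sin c ^ 2 * sin_sq b + (1 - cos b ^ 2) * sin_sq c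

-- The right-hand side is symmetric in `a, b, c`; this is the source of the law of sines.
theorem sin_mul_sin_mul_sin_eq_sqrt_of_cos_eq {a b c A : ℝ}
    (h : cos a = cos b * cos c + sin b * sin c * cos A) (hnonneg : 0 ≤ sin b * sin c * sin A) :
    sin b * sin c * sin A =
      √(1 - cos a ^ 2 - cos b ^ 2 - cos c ^ 2 + 2 * cos a * cos b * cos c) := by
  rw [← sq_sin_mul_sin_mul_sin_of_cos_eq h, sqrt_sq hnonneg]

structure IsSphericalTriangle (a b c A B C : ℝ) : Prop where
  mem_a : a ∈ Ioo 0 π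
  mem_b : b ∈ Ioo 0 π
  mem_c : c ∈ Ioo 0 π
  mem_A : A ∈ Ioo 0 π
  mem_B : B ∈ Ioo 0 π
  mem_C : C ∈ Ioo 0 π
  cos_a_eq : cos a = cos b * cos c + sin b * sin c * cos A
  cos_b_eq : cos b = cos a * cos c + sin a * sin c * cos B
  cos_c_eq : cos c = cos a * cos b + sin a * sin b * cos C

namespace IsSphericalTriangle

variable {a b c A B C : ℝ}

theorem law_of_sines_A (t : IsSphericalTriangle a b c A B C) :
    sin b * sin c * sin A = sin a * sin b * sin C := by
  rw [sin_mul_sin_mul_sin_eq_sqrt_of_cos_eq t.cos_a_eq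
      (sin_mul_sin_mul_sin_pos t.mem_b t.mem_c t.mem_A).le,
    sin_mul_sin_mul_sin_eq_sqrt_of_cos_eq t.cos_c_eq
      (sin_mul_sin_mul_sin_pos t.mem_a t.mem_b t.mem_C).le]
  ring_nf

theorem law_of_sines_B (t : IsSphericalTriangle a b c A B C) :
    sin a * sin c * sin B = sin a * sin b * sin C := by
  rw [sin_mul_sin_mul_sin_eq_sqrt_of_cos_eq t.cos_b_eq
      (sin_mul_sin_mul_sin_pos t.mem_a t.mem_c t.mem_B).le,
    sin_mul_sin_mul_sin_eq_sqrt_of_cos_eq t.cos_c_eq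
      (sin_mul_sin_mul_sin_pos t.mem_a t.mem_b t.mem_C).le]
  ring_nf

theorem one_sub_cos_mul_pos (t : IsSphericalTriangle a b c A B C) :
    0 < (1 - cos a) * (1 - cos b) * (1 - cos c) := by
  have ha := (abs_lt.mp (abs_cos_lt_one_of_mem_Ioo t.mem_a)).2
  have hb := (abs_lt.mp (abs_cos_lt_one_of_mem_Ioo t.mem_b)).2
  have hc := (abs_lt.mp (abs_cos_lt_one_of_mem_Ioo t.mem_c)).2
  apply mul_pos (mul_pos _ _) <;> linarith

theorem one_add_cos_mul_pos (t : IsSphericalTriangle a b c A B C) :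
    0 < (1 + cos a) * (1 + cos b) * (1 + cos c) := by
  have ha := (abs_lt.mp (abs_cos_lt_one_of_mem_Ioo t.mem_a)).1
  have hb := (abs_lt.mp (abs_cos_lt_one_of_mem_Ioo t.mem_b)).1
  have hc := (abs_lt.mp (abs_cos_lt_one_of_mem_Ioo t.mem_c)).1
  apply mul_pos (mul_pos _ _) <;> linarith

theorem cos_and_sin_angle_sum_mul (t : IsSphericalTriangle a b c A B C) :
    let m := sin a * sin b * sin C
    let W := (1 - cos a ^ 2) * (1 - cos b ^ 2) * (1 - cos c ^ 2)
    cos (A + B + C) * W = (cos a - cos b * cos c) * (cos b - cos a * cos c) *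
        (cos c - cos a * cos b) - m ^ 2 * ((cos a - cos b * cos c) + (cos b - cos a * cos c) +
        (cos c - cos a * cos b)) ∧
      sin (A + B + C) * W = m * ((cos b - cos a * cos c) * (cos c - cos a * cos b) +
        (cos a - cos b * cos c) * (cos c - cos a * cos b) +
        (cos a - cos b * cos c) * (cos b - cos a * cos c) - m ^ 2) := by
  intro m W
  have hcA : cos A * (sin b * sin c) = cos a - cos b * cos c := by linear_combination -t.cos_a_eq
  have hcB : cos B * (sin a * sin c) = cos b - cos a * cos c := by linear_combination -t.cos_b_eq
  have hcC : cos C * (sin a * sin b) = cos c - cos a * cos b := by linear_combination -t.cos_c_eq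
  have hsA : sin A * (sin b * sin c) = m := by linear_combination t.law_of_sines_A
  have hsB : sin B * (sin a * sin c) = m := by linear_combination t.law_of_sines_B
  have hsC : sin C * (sin a * sin b) = m := by ring
  have hW : (sin a * sin b * sin c) ^ 2 = W := by rw [mul_pow, mul_pow, sin_sq, sin_sq, sin_sq]
  rw [← hW]
  constructor
  · calc cos (A + B + C) * (sin a * sin b * sin c) ^ 2
        = cos A * (sin b * sin c) * (cos B * (sin a * sin c)) * (cos C * (sin a * sin b))
          - cos A * (sin b * sin c) * (sin B * (sin a * sin c)) * (sin C * (sin a * sin b))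
          - sin A * (sin b * sin c) * (cos B * (sin a * sin c)) * (sin C * (sin a * sin b))
          - sin A * (sin b * sin c) * (sin B * (sin a * sin c)) * (cos C * (sin a * sin b)) := by
          rw [cos_add, cos_add, sin_add]; ring
      _ = _ := by rw [hcA, hcB, hcC, hsA, hsB, hsC]; ring
  · calc sin (A + B + C) * (sin a * sin b * sin c) ^ 2
        = sin A * (sin b * sin c) * (cos B * (sin a * sin c)) * (cos C * (sin a * sin b))
          + cos A * (sin b * sin c) * (sin B * (sin a * sin c)) * (cos C * (sin a * sin b))
          + cos A * (sin b * sin c) * (cos B * (sin a * sin c)) * (sin C * (sin a * sin b))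
          - sin A * (sin b * sin c) * (sin B * (sin a * sin c)) * (sin C * (sin a * sin b)) := by
          rw [sin_add, sin_add, cos_add]; ring
      _ = _ := by rw [hcA, hcB, hcC, hsA, hsB, hsC]; ring

theorem one_add_cos_angle_sum_mul (t : IsSphericalTriangle a b c A B C) :
    (1 + cos (A + B + C)) * ((1 + cos a) * (1 + cos b) * (1 + cos c)) =
      (sin a * sin b * sin C) ^ 2 := by
  have hm := sq_sin_mul_sin_mul_sin_of_cos_eq t.cos_c_eq
  apply mul_right_cancel₀ t.one_sub_cos_mul_pos.ne'
  linear_combination t.cos_and_sin_angle_sum_mul.1 - ((cos a - cos b * cos c) +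
    (cos b - cos a * cos c) + (cos c - cos a * cos b) + (1 - cos a) * (1 - cos b) * (1 - cos c)) * hm

theorem sin_angle_sum_mul (t : IsSphericalTriangle a b c A B C) :
    sin (A + B + C) * ((1 + cos a) * (1 + cos b) * (1 + cos c)) =
      -((1 + cos a + cos b + cos c) * (sin a * sin b * sin C)) := by
  have hm := sq_sin_mul_sin_mul_sin_of_cos_eq t.cos_c_eq
  apply mul_right_cancel₀ t.one_sub_cos_mul_pos.ne'
  linear_combination t.cos_and_sin_angle_sum_mul.2 - sin a * sin b * sin C * hm

theorem tan_half_excess (t : IsSphericalTriangle a b c A B C) :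
    tan ((A + B + C - π) / 2) = sin a * sin b * sin C / (1 + cos a + cos b + cos c) := by
  rw [tan_half_eq_one_sub_cos_div_sin, cos_sub_pi, sin_sub_pi, sub_neg_eq_add,
    ← mul_div_mul_right _ _ t.one_add_cos_mul_pos.ne', neg_mul, t.one_add_cos_angle_sum_mul,
    t.sin_angle_sum_mul, neg_neg, sq, mul_comm (1 + cos a + cos b + cos c),
    mul_div_mul_left _ _ (sin_mul_sin_mul_sin_pos t.mem_a t.mem_b t.mem_C).ne']

end IsSphericalTriangle

/-- Area formula of SAS type: for a spherical triangle with sides `a, b` and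
included angle `C`, the area `|σ| = A + B + C - π` satisfies
`tan (|σ|/2) = sin C / (cot (a/2) * cot (b/2) + cos C)`. -/
theorem spherical_area_SAS
    (a b c A B C : ℝ)
    (ha : a ∈ Ioo 0 π) (hb : b ∈ Ioo 0 π) (hc : c ∈ Ioo 0 π)
    (hA : A ∈ Ioo 0 π) (hB : B ∈ Ioo 0 π) (hC : C ∈ Ioo 0 π)
    (lawA : Real.cos a = Real.cos b * Real.cos c + Real.sin b * Real.sin c * Real.cos A)
    (lawB : Real.cos b = Real.cos a * Real.cos c + Real.sin a * Real.sin c * Real.cos B)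
    (lawC : Real.cos c = Real.cos a * Real.cos b + Real.sin a * Real.sin b * Real.cos C) :
    Real.tan ((A + B + C - π) / 2) =
      Real.sin C / (Real.cot (a / 2) * Real.cot (b / 2) + Real.cos C) := by
  have t : IsSphericalTriangle a b c A B C := ⟨ha, hb, hc, hA, hB, hC, lawA, lawB, lawC⟩
  have hsa := (sin_pos_of_mem_Ioo ha).ne'
  have hsb := (sin_pos_of_mem_Ioo hb).ne'
  rw [t.tan_half_excess, cot_half_eq_one_add_cos_div_sin, cot_half_eq_one_add_cos_div_sin,
    ← mul_div_mul_left (sin C) _ (mul_ne_zero hsa hsb), lawC]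
  congr 1
  field_simp
  ring
end

section
/- For a spherical triangle with fixed side lengths a and b and variable included angle C, the area is maximized exactly when the third side equals the diameter of the circumscribed circle, and the maximal area satisfies |σ| ≤ 2 arctan(√((1−cos a)(1−cos b)/(2(cos a + cos b)))), assuming cos a + cos b > 0. -/
/-!
Write `E = A + B + C - π`, `P = (1 + cos a)(1 + cos b)(1 + cos c)` and
`N = 1 + cos a + cos b + cos c`. The cosine and sine laws give the half-angle formulas of the
excess in the form `P sin E = N sin a sin b sin C` and `P (1 + cos E) = N²`; as `N > 0`, the
first one puts `E` in `(0, π)`, where `cos` is injective. For the bound `M` one has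
`(1 + cos a)(1 + cos b)(1 + cos M) = 4 (cos a + cos b)`, hence
`P (cos E - cos M) = (1 + cos c - cos a - cos b)²`: so `E ≤ M`, with equality iff
`1 + cos c = cos a + cos b`. Similarly
`4 (1 - cos a)(1 - cos b)(cos² (c/2) - (cos (a/2) cos (b/2) sin C)²)` equals
`(1 + cos c - cos a - cos b)²`, so this is also the condition
`cos (c/2) = cos (a/2) cos (b/2) sin C`, i.e. `tan (c/2) = tan R`.
-/

open Real Set

theorem one_add_cos_pos_of_mem_Ioo {x : ℝ} (hx : x ∈ Ioo 0 π) : 0 < 1 + cos x := by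
  have := cos_lt_cos_of_nonneg_of_le_pi hx.1.le le_rfl hx.2
  rw [cos_pi] at this
  linarith

theorem cos_lt_one_of_mem_Ioo {x : ℝ} (hx : x ∈ Ioo 0 π) : cos x < 1 := by
  simpa using cos_lt_cos_of_nonneg_of_le_pi le_rfl hx.2.le hx.1

theorem cos_sq_half (x : ℝ) : cos (x / 2) ^ 2 = (1 + cos x) / 2 := by
  rw [cos_sq]
  ring_nf

theorem sin_eq_two_mul_sin_half_mul_cos_half (x : ℝ) : sin x = 2 * sin (x / 2) * cos (x / 2) := by
  rw [← sin_two_mul]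
  ring_nf

structure IsSphericalTriangle_s7 (a b c A B C : ℝ) : Prop where
  a_mem : a ∈ Ioo 0 π
  b_mem : b ∈ Ioo 0 π
  c_mem : c ∈ Ioo 0 π
  A_mem : A ∈ Ioo 0 π
  B_mem : B ∈ Ioo 0 π
  C_mem : C ∈ Ioo 0 π
  cos_a : cos a = cos b * cos c + sin b * sin c * cos A
  cos_b : cos b = cos a * cos c + sin a * sin c * cos B
  cos_c : cos c = cos a * cos b + sin a * sin b * cos C

namespace IsSphericalTriangle_s7

variable {a b c A B C : ℝ}

theorem sin_c_mul_sin_A (t : IsSphericalTriangle_s7 a b c A B C) :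
    sin c * sin A = sin a * sin C := by
  have := sin_pos_of_mem_Ioo t.a_mem
  have := sin_pos_of_mem_Ioo t.b_mem
  have := sin_pos_of_mem_Ioo t.c_mem
  have := sin_pos_of_mem_Ioo t.A_mem
  have := sin_pos_of_mem_Ioo t.C_mem
  have h : sin b * sin c * sin A = sin a * sin b * sin C := by
    refine (pow_left_inj₀ (by positivity) (by positivity) two_ne_zero).mp ?_
    rw [sq_sin_mul_sin_mul_sin_of_cos_eq t.cos_a, sq_sin_mul_sin_mul_sin_of_cos_eq t.cos_c]
    ring
  exact mul_left_cancel₀ (sin_pos_of_mem_Ioo t.b_mem).ne' (by linear_combination h)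

theorem sin_c_mul_sin_B (t : IsSphericalTriangle_s7 a b c A B C) :
    sin c * sin B = sin b * sin C := by
  have := sin_pos_of_mem_Ioo t.a_mem
  have := sin_pos_of_mem_Ioo t.b_mem
  have := sin_pos_of_mem_Ioo t.c_mem
  have := sin_pos_of_mem_Ioo t.B_mem
  have := sin_pos_of_mem_Ioo t.C_mem
  have h : sin a * sin c * sin B = sin a * sin b * sin C := by
    refine (pow_left_inj₀ (by positivity) (by positivity) two_ne_zero).mp ?_
    rw [sq_sin_mul_sin_mul_sin_of_cos_eq t.cos_b, sq_sin_mul_sin_mul_sin_of_cos_eq t.cos_c]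
    ring
  exact mul_left_cancel₀ (sin_pos_of_mem_Ioo t.a_mem).ne' (by linear_combination h)

theorem one_add_cos_c_mul_sin_add (t : IsSphericalTriangle_s7 a b c A B C) :
    (1 + cos c) * sin (A + B) = sin C * (cos a + cos b) := by
  have hsab := mul_pos (sin_pos_of_mem_Ioo t.a_mem) (sin_pos_of_mem_Ioo t.b_mem)
  have hz := cos_lt_one_of_mem_Ioo t.c_mem
  have key : sin a * sin b * (1 - cos c) * ((1 + cos c) * sin (A + B))
      = sin a * sin b * (1 - cos c) * (sin C * (cos a + cos b)) := by
    linear_combination (sin a * sin b * sin c ^ 2) * sin_add A B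
      + (sin a * sin b * sin c * cos B) * t.sin_c_mul_sin_A
      + (sin a * sin b * sin c * cos A) * t.sin_c_mul_sin_B
      - (sin a * sin b * sin C) * t.cos_a - (sin a * sin b * sin C) * t.cos_b
      - (sin a * sin b * sin (A + B)) * sin_sq_add_cos_sq c
  exact mul_left_cancel₀ (mul_pos hsab (sub_pos.2 hz)).ne' key

theorem sin_mul_sin_mul_one_add_cos_c_mul_cos_add (t : IsSphericalTriangle_s7 a b c A B C) :
    sin a * sin b * (1 + cos c) * cos (A + B)
      = (cos a + cos b) ^ 2 - (1 + cos c) * (1 + cos a * cos b) := by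
  have hz := cos_lt_one_of_mem_Ioo t.c_mem
  have key : (1 - cos c) * (sin a * sin b * (1 + cos c) * cos (A + B))
      = (1 - cos c) * ((cos a + cos b) ^ 2 - (1 + cos c) * (1 + cos a * cos b)) := by
    linear_combination (sin a * sin b * sin c ^ 2) * cos_add A B
      - (sin a * sin c * cos B) * t.cos_a - (cos a - cos b * cos c) * t.cos_b
      - (sin c * sin B * sin a * sin b) * t.sin_c_mul_sin_A
      - (sin a * sin C * sin a * sin b) * t.sin_c_mul_sin_B
      - sq_sin_mul_sin_mul_sin_of_cos_eq t.cos_c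
      - (sin a * sin b * cos (A + B)) * sin_sq_add_cos_sq c
  exact mul_left_cancel₀ (by linarith) key

theorem mul_sin_excess (t : IsSphericalTriangle_s7 a b c A B C) :
    (1 + cos a) * (1 + cos b) * (1 + cos c) * sin (A + B + C - π)
      = (1 + cos a + cos b + cos c) * (sin a * sin b * sin C) := by
  have hsab : 0 < sin a * sin b :=
    mul_pos (sin_pos_of_mem_Ioo t.a_mem) (sin_pos_of_mem_Ioo t.b_mem)
  have hE : sin (A + B + C - π) = -(sin (A + B) * cos C + cos (A + B) * sin C) := by
    rw [sin_sub_pi, sin_add]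
  refine mul_left_cancel₀ hsab.ne' ?_
  linear_combination ((1 + cos a) * (1 + cos b) * (1 + cos c) * sin a * sin b) * hE
    - ((1 + cos a) * (1 + cos b) * sin a * sin b * cos C) * t.one_add_cos_c_mul_sin_add
    - ((1 + cos a) * (1 + cos b) * sin C) * t.sin_mul_sin_mul_one_add_cos_c_mul_cos_add
    + ((1 + cos a) * (1 + cos b) * sin C * (cos a + cos b)) * t.cos_c
    - ((1 + cos a + cos b + cos c) * sin C * sin b ^ 2) * sin_sq_add_cos_sq a
    - ((1 + cos a + cos b + cos c) * sin C * (1 - cos a ^ 2)) * sin_sq_add_cos_sq b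

theorem mul_one_add_cos_excess (t : IsSphericalTriangle_s7 a b c A B C) :
    (1 + cos a) * (1 + cos b) * (1 + cos c) * (1 + cos (A + B + C - π))
      = (1 + cos a + cos b + cos c) ^ 2 := by
  have hsab : 0 < (sin a * sin b) ^ 2 :=
    pow_pos (mul_pos (sin_pos_of_mem_Ioo t.a_mem) (sin_pos_of_mem_Ioo t.b_mem)) 2
  have hE : cos (A + B + C - π) = -(cos (A + B) * cos C - sin (A + B) * sin C) := by
    rw [cos_sub_pi, cos_add]
  refine mul_left_cancel₀ hsab.ne' ?_
  linear_combination ((1 + cos a) * (1 + cos b) * (1 + cos c) * (sin a * sin b) ^ 2) * hE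
    - ((1 + cos a) * (1 + cos b) * sin a * sin b * cos C)
      * t.sin_mul_sin_mul_one_add_cos_c_mul_cos_add
    + ((1 + cos a) * (1 + cos b) * (sin a * sin b) ^ 2 * sin C) * t.one_add_cos_c_mul_sin_add
    + ((1 + cos a) * (1 + cos b) * ((cos a + cos b) ^ 2 - (1 + cos c) * (1 + cos a * cos b)))
      * t.cos_c
    + ((1 + cos a) * (1 + cos b) * (cos a + cos b)) * sq_sin_mul_sin_mul_sin_of_cos_eq t.cos_c
    + (((1 + cos a) * (1 + cos b) * (1 + cos c) - (1 + cos a + cos b + cos c) ^ 2) * sin b ^ 2)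
      * sin_sq_add_cos_sq a
    + (((1 + cos a) * (1 + cos b) * (1 + cos c) - (1 + cos a + cos b + cos c) ^ 2)
      * (1 - cos a ^ 2)) * sin_sq_add_cos_sq b

theorem prod_one_add_cos_pos (t : IsSphericalTriangle_s7 a b c A B C) :
    0 < (1 + cos a) * (1 + cos b) * (1 + cos c) :=
  mul_pos (mul_pos (one_add_cos_pos_of_mem_Ioo t.a_mem) (one_add_cos_pos_of_mem_Ioo t.b_mem))
    (one_add_cos_pos_of_mem_Ioo t.c_mem)

theorem excess_mem_Ioo (t : IsSphericalTriangle_s7 a b c A B C)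
    (hN : 0 < 1 + cos a + cos b + cos c) : A + B + C - π ∈ Ioo 0 π := by
  obtain ⟨hA0, hAπ⟩ := t.A_mem
  obtain ⟨hB0, hBπ⟩ := t.B_mem
  obtain ⟨hC0, hCπ⟩ := t.C_mem
  have hV : 0 < sin a * sin b * sin C := mul_pos (mul_pos (sin_pos_of_mem_Ioo t.a_mem)
    (sin_pos_of_mem_Ioo t.b_mem)) (sin_pos_of_mem_Ioo t.C_mem)
  have hsin : 0 < sin (A + B + C - π) := by
    refine pos_of_mul_pos_right ?_ t.prod_one_add_cos_pos.le
    rw [t.mul_sin_excess]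
    exact mul_pos hN hV
  constructor
  · by_contra! h
    exact hsin.not_ge (sin_nonpos_of_nonpos_of_neg_pi_le h (by linarith))
  · by_contra! h
    have := sin_nonneg_of_nonneg_of_le_pi (x := A + B + C - π - π) (by linarith) (by linarith)
    rw [sin_sub_pi] at this
    linarith

end IsSphericalTriangle_s7

noncomputable def maxExcess (a b : ℝ) : ℝ :=
  2 * arctan √((1 - cos a) * (1 - cos b) / (2 * (cos a + cos b)))

theorem maxExcess_mem_Ico (a b : ℝ) : maxExcess a b ∈ Ico 0 π := by
  have h0 := arctan_nonneg.2 (sqrt_nonneg ((1 - cos a) * (1 - cos b) / (2 * (cos a + cos b))))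
  have h1 := arctan_lt_pi_div_two √((1 - cos a) * (1 - cos b) / (2 * (cos a + cos b)))
  constructor <;> unfold maxExcess <;> linarith

theorem one_add_cos_maxExcess {a b : ℝ} (hab : 0 < cos a + cos b) :
    (1 + cos a) * (1 + cos b) * (1 + cos (maxExcess a b)) = 4 * (cos a + cos b) := by
  set q := (1 - cos a) * (1 - cos b) / (2 * (cos a + cos b)) with hq_def
  have hq : 0 ≤ q := div_nonneg
    (mul_nonneg (sub_nonneg.2 (cos_le_one a)) (sub_nonneg.2 (cos_le_one b))) (by linarith)
  have hQ : (1 + cos a) * (1 + cos b) = 2 * (cos a + cos b) * (1 + q) := by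
    rw [hq_def]
    field_simp
    ring
  have : 1 + q ≠ 0 := by positivity
  rw [maxExcess, cos_two_mul, cos_sq_arctan, sq_sqrt hq, hQ]
  field_simp
  ring

namespace IsSphericalTriangle_s7

variable {a b c A B C : ℝ}

theorem mul_cos_excess_sub_cos_maxExcess (t : IsSphericalTriangle_s7 a b c A B C)
    (hab : 0 < cos a + cos b) :
    (1 + cos a) * (1 + cos b) * (1 + cos c) * (cos (A + B + C - π) - cos (maxExcess a b))
      = (1 + cos c - cos a - cos b) ^ 2 := by
  linear_combination t.mul_one_add_cos_excess - (1 + cos c) * one_add_cos_maxExcess hab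

theorem cos_maxExcess_le_cos_excess (t : IsSphericalTriangle_s7 a b c A B C)
    (hab : 0 < cos a + cos b) : cos (maxExcess a b) ≤ cos (A + B + C - π) := by
  have h := t.mul_cos_excess_sub_cos_maxExcess hab
  have := nonneg_of_mul_nonneg_right (h ▸ sq_nonneg _) t.prod_one_add_cos_pos
  linarith

theorem excess_mem_Icc (t : IsSphericalTriangle_s7 a b c A B C) (hab : 0 < cos a + cos b) :
    A + B + C - π ∈ Icc 0 π :=
  Ioo_subset_Icc_self <| t.excess_mem_Ioo (by linarith [one_add_cos_pos_of_mem_Ioo t.c_mem])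

theorem excess_le_maxExcess (t : IsSphericalTriangle_s7 a b c A B C) (hab : 0 < cos a + cos b) :
    A + B + C - π ≤ maxExcess a b :=
  (strictAntiOn_cos.le_iff_ge (Ico_subset_Icc_self (maxExcess_mem_Ico a b))
    (t.excess_mem_Icc hab)).mp (t.cos_maxExcess_le_cos_excess hab)

theorem excess_eq_maxExcess_iff (t : IsSphericalTriangle_s7 a b c A B C)
    (hab : 0 < cos a + cos b) :
    A + B + C - π = maxExcess a b ↔ 1 + cos c = cos a + cos b := by
  have h := t.mul_cos_excess_sub_cos_maxExcess hab
  calc A + B + C - π = maxExcess a b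
      ↔ cos (A + B + C - π) = cos (maxExcess a b) :=
        (injOn_cos.eq_iff (t.excess_mem_Icc hab)
          (Ico_subset_Icc_self (maxExcess_mem_Ico a b))).symm
    _ ↔ (1 + cos c - cos a - cos b) ^ 2 = 0 := by
        rw [← h, mul_eq_zero_iff_left t.prod_one_add_cos_pos.ne', sub_eq_zero]
    _ ↔ 1 + cos c = cos a + cos b := by
        rw [sq_eq_zero_iff, sub_sub, sub_eq_zero]

theorem eq_two_mul_circumradius_iff (t : IsSphericalTriangle_s7 a b c A B C) {R : ℝ}
    (hR : R ∈ Ioo 0 (π / 2))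
    (htanR : tan R = 4 * sin (a / 2) * sin (b / 2) * sin (c / 2) / (sin a * sin b * sin C)) :
    c = 2 * R ↔ 1 + cos c = cos a + cos b := by
  obtain ⟨ha0, haπ⟩ := t.a_mem
  obtain ⟨hb0, hbπ⟩ := t.b_mem
  obtain ⟨hc0, hcπ⟩ := t.c_mem
  obtain ⟨hR0, hRπ⟩ := hR
  have hsa := sin_pos_of_mem_Ioo (x := a / 2) ⟨by linarith, by linarith⟩
  have hsb := sin_pos_of_mem_Ioo (x := b / 2) ⟨by linarith, by linarith⟩
  have hsc := sin_pos_of_mem_Ioo (x := c / 2) ⟨by linarith, by linarith⟩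
  have hca := cos_pos_of_mem_Ioo (x := a / 2) ⟨by linarith, by linarith⟩
  have hcb := cos_pos_of_mem_Ioo (x := b / 2) ⟨by linarith, by linarith⟩
  have hcc := cos_pos_of_mem_Ioo (x := c / 2) ⟨by linarith, by linarith⟩
  have hsC := sin_pos_of_mem_Ioo t.C_mem
  have hD : 0 < cos (a / 2) * cos (b / 2) * sin C := by positivity
  have htan : tan R = sin (c / 2) / (cos (a / 2) * cos (b / 2) * sin C) := by
    rw [htanR, sin_eq_two_mul_sin_half_mul_cos_half a, sin_eq_two_mul_sin_half_mul_cos_half b]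
    field_simp
    norm_num
  have hsq : 4 * (1 - cos a) * (1 - cos b)
      * (cos (c / 2) ^ 2 - (cos (a / 2) * cos (b / 2) * sin C) ^ 2)
      = (1 + cos c - cos a - cos b) ^ 2 := by
    rw [mul_pow, mul_pow, cos_sq_half, cos_sq_half, cos_sq_half]
    linear_combination (-1) * sq_sin_mul_sin_mul_sin_of_cos_eq t.cos_c
      + (sin C ^ 2 * sin b ^ 2) * sin_sq_add_cos_sq a
      + (sin C ^ 2 * (1 - cos a ^ 2)) * sin_sq_add_cos_sq b
  have h4 : 4 * (1 - cos a) * (1 - cos b) ≠ 0 := by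
    have := cos_lt_one_of_mem_Ioo t.a_mem
    have := cos_lt_one_of_mem_Ioo t.b_mem
    apply mul_ne_zero (mul_ne_zero four_ne_zero _) <;> linarith
  calc c = 2 * R ↔ c / 2 = R := by constructor <;> intro h <;> linarith
    _ ↔ tan (c / 2) = tan R :=
        (injOn_tan.eq_iff ⟨by linarith, by linarith⟩ ⟨by linarith, by linarith⟩).symm
    _ ↔ cos (c / 2) = cos (a / 2) * cos (b / 2) * sin C := by
        rw [htan, tan_eq_sin_div_cos, div_eq_div_iff hcc.ne' hD.ne', mul_right_inj' hsc.ne',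
          eq_comm]
    _ ↔ cos (c / 2) ^ 2 = (cos (a / 2) * cos (b / 2) * sin C) ^ 2 :=
        (pow_left_inj₀ hcc.le hD.le two_ne_zero).symm
    _ ↔ (1 + cos c - cos a - cos b) ^ 2 = 0 := by
        rw [← hsq, mul_eq_zero_iff_left h4, sub_eq_zero]
    _ ↔ 1 + cos c = cos a + cos b := by
        rw [sq_eq_zero_iff, sub_sub, sub_eq_zero]

end IsSphericalTriangle_s7

/-- Among spherical triangles with fixed side lengths `a, b ∈ (0, π/2]` with
`cos a + cos b > 0` and variable included angle `C`, the area
`|σ| = A + B + C - π` satisfies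
`|σ| ≤ 2 arctan √((1 - cos a)(1 - cos b) / (2 (cos a + cos b)))`,
with equality exactly when the third side `c` equals the diameter `2R` of the
circumscribed circle (where `tan R = 4 sin(a/2) sin(b/2) sin(c/2) / D`,
`D = sin a sin b sin C`). -/
theorem spherical_area_max_fixed_two_sides
    (a b : ℝ)
    (ha : a ∈ Ioc 0 (π / 2)) (hb : b ∈ Ioc 0 (π / 2))
    (hab : 0 < Real.cos a + Real.cos b)
    (c A B C R : ℝ)
    (hc : c ∈ Ioo 0 π)
    (hA : A ∈ Ioo 0 π) (hB : B ∈ Ioo 0 π) (hC : C ∈ Ioo 0 π)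
    (lawA : Real.cos a = Real.cos b * Real.cos c + Real.sin b * Real.sin c * Real.cos A)
    (lawB : Real.cos b = Real.cos a * Real.cos c + Real.sin a * Real.sin c * Real.cos B)
    (lawC : Real.cos c = Real.cos a * Real.cos b + Real.sin a * Real.sin b * Real.cos C)
    (hR : R ∈ Ioo 0 (π / 2))
    (htanR : Real.tan R =
      4 * Real.sin (a / 2) * Real.sin (b / 2) * Real.sin (c / 2) /
        (Real.sin a * Real.sin b * Real.sin C)) :
    A + B + C - π ≤
      2 * Real.arctan
        (Real.sqrt ((1 - Real.cos a) * (1 - Real.cos b) / (2 * (Real.cos a + Real.cos b)))) ∧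
    (A + B + C - π =
      2 * Real.arctan
        (Real.sqrt ((1 - Real.cos a) * (1 - Real.cos b) / (2 * (Real.cos a + Real.cos b)))) ↔
      c = 2 * R) := by
  have hπ := pi_pos
  have t : IsSphericalTriangle_s7 a b c A B C :=
    ⟨⟨ha.1, by linarith [ha.2]⟩, ⟨hb.1, by linarith [hb.2]⟩, hc, hA, hB, hC, lawA, lawB, lawC⟩
  exact ⟨t.excess_le_maxExcess hab,
    (t.excess_eq_maxExcess_iff hab).trans (t.eq_two_mul_circumradius_iff hR htanR).symm⟩
end

section
/- With x = 1 + cos c regarded as a variable for a spherical triangle with fixed sides a, b, the area satisfies d|σ|/dx = (cos a + cos b − x)/(x·D), where D = sin a sin b sin C and |σ| = 2 arctan(D/u) with u = cos a + cos b + x. -/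
/-!
Differentiate `2 arctan (D/u)` by the quotient and chain rules, using `D' = P'/(2D)` for
`D = √P`. With `s = cos a + cos b` and `p = cos a cos b` one has
`u² + D² = 2x(1 + s + p)` and `D'u - D = (1 + s + p)(s - x)/D`, so the factor `1 + s + p`
cancels and leaves `(s - x)/(x D)`. The point `x = 0` is excluded automatically, since there
`D = √(-s²) = 0`.
-/

open Real Set

theorem HasDerivAt.arctan_div {f g : ℝ → ℝ} {f' g' x : ℝ} (hf : HasDerivAt f f' x)
    (hg : HasDerivAt g g' x) (hgx : g x ≠ 0) :
    HasDerivAt (fun y => Real.arctan (f y / g y))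
      ((f' * g x - f x * g') / (g x ^ 2 + f x ^ 2)) x := by
  refine (hf.div hg hgx).arctan.congr_deriv ?_
  simp only [Pi.div_apply]
  field_simp

theorem spherical_area_deriv_in_x_general
    (a b : ℝ)
    (u D S : ℝ → ℝ)
    (hu : ∀ x, u x = Real.cos a + Real.cos b + x)
    (hD : ∀ x, D x = Real.sqrt
      (-(Real.cos a + Real.cos b) ^ 2 + 2 * (Real.cos a * Real.cos b + 1) * x - x ^ 2))
    (hS : ∀ x, S x = 2 * Real.arctan (D x / u x))
    (x₀ : ℝ)
    (hD₀ : 0 < D x₀) (hu₀ : 0 < u x₀) :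
    HasDerivAt S ((Real.cos a + Real.cos b - x₀) / (x₀ * D x₀)) x₀ := by
  set s := cos a + cos b
  set p := cos a * cos b
  set P : ℝ → ℝ := fun x => -s ^ 2 + 2 * (p + 1) * x - x ^ 2
  have hP₀ : 0 < P x₀ := sqrt_pos.mp (hD x₀ ▸ hD₀)
  have hDsq : D x₀ ^ 2 = P x₀ := hD x₀ ▸ sq_sqrt hP₀.le
  have hx₀ : x₀ ≠ 0 := by
    rintro rfl
    nlinarith [sq_nonneg s]
  have hP' : HasDerivAt P (2 * (p + 1) - 2 * x₀) x₀ :=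
    ((((hasDerivAt_id' x₀).const_mul (2 * (p + 1))).const_add (-s ^ 2)).sub
      (hasDerivAt_pow 2 x₀)).congr_deriv (by norm_num)
  have hD' : HasDerivAt D ((2 * (p + 1) - 2 * x₀) / (2 * D x₀)) x₀ := by
    convert hP'.sqrt hP₀.ne' using 1
    · exact funext hD
    · rw [hD x₀]
  have hu' : HasDerivAt u 1 x₀ := by
    rw [funext hu]
    simpa using (hasDerivAt_id x₀).const_add s
  rw [funext hS]
  refine ((HasDerivAt.arctan_div hD' hu' hu₀.ne').const_mul 2).congr_deriv ?_
  rw [hu x₀]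
  field_simp
  linear_combination -(s + x₀) * hDsq

/-- With `x = 1 + cos c` regarded as a variable for a spherical triangle with
fixed sides `a, b`, setting `u(x) = cos a + cos b + x`,
`D(x) = √(-(cos a + cos b)² + 2(cos a cos b + 1) x - x²)` (`= sin a sin b sin C`)
and `|σ|(x) = 2 arctan (D(x)/u(x))`, one has
`d|σ|/dx = (cos a + cos b - x)/(x · D(x))`. -/
theorem spherical_area_deriv_in_x
    (a b : ℝ) (ha : a ∈ Ioo 0 π) (hb : b ∈ Ioo 0 π)
    (u D S : ℝ → ℝ)
    (hu : ∀ x, u x = Real.cos a + Real.cos b + x)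
    (hD : ∀ x, D x = Real.sqrt
      (-(Real.cos a + Real.cos b) ^ 2 + 2 * (Real.cos a * Real.cos b + 1) * x - x ^ 2))
    (hS : ∀ x, S x = 2 * Real.arctan (D x / u x))
    (x₀ : ℝ) (hx₀ : x₀ ∈ Ioo (0:ℝ) 2)
    (hD₀ : 0 < D x₀) (hu₀ : 0 < u x₀) :
    HasDerivAt S ((Real.cos a + Real.cos b - x₀) / (x₀ * D x₀)) x₀ :=
  spherical_area_deriv_in_x_general a b u D S hu hD hS x₀ hD₀ hu₀
end

section
/- Among spherical quadrilaterals with given side lengths ℓ₁, ℓ₂, ℓ₃, ℓ₄ (sufficiently small so all quantities are defined), the area, viewed as a function A(x) of x = 1 + cos d where d is the diagonal separating sides {ℓ₁,ℓ₂} from {ℓ₃,ℓ₄}, has a critical point at x₀ = ((c₁+c₂)√((1−c₃)(1−c₄)) + (c₃+c₄)√((1−c₁)(1−c₂))) / (√((1−c₁)(1−c₂)) + √((1−c₃)(1−c₄))), where cᵢ = cos ℓᵢ; moreover D₁/D₂ = √((1−c₁)(1−c₂))/√((1−c₃)(1−c₄)) at x₀, where D₁, D₂ are the determinants of the two triangles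 cut by the diagonal. -/
/-!
With `sᵢ = √((1 - c)(1 - c'))` for the sides `c, c'` of triangle `i`, completing the square gives
`Dᵢ(x)² = 2 sᵢ² x - (x - (c + c'))²`, and `d/dx arctan (Dᵢ / uᵢ) = (c + c' - x) / (2x Dᵢ)`.
The point `x₀` is characterised by `(x₀ - (c₁ + c₂)) s₂ + (x₀ - (c₃ + c₄)) s₁ = 0`; there
`D₁² / s₁² = D₂² / s₂²`, so `D₁ / D₂ = s₁ / s₂`, and with this proportionality the two derivative
terms cancel.
-/

open Real Set

/-- The Gram determinant of the unit vectors at the vertices of a spherical triangle whose sides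
have cosines `a`, `b` and `x - 1`. -/
def triangleGram (a b x : ℝ) : ℝ := -(a + b) ^ 2 + 2 * (a * b + 1) * x - x ^ 2

theorem triangleGram_eq (a b x : ℝ) :
    triangleGram a b x = 2 * ((1 - a) * (1 - b)) * x - (x - (a + b)) ^ 2 := by
  unfold triangleGram; ring

theorem sq_add_triangleGram (a b x : ℝ) :
    (a + b + x) ^ 2 + triangleGram a b x = 2 * x * ((1 + a) * (1 + b)) := by
  unfold triangleGram; ring

theorem hasDerivAt_triangleGram (a b x : ℝ) :
    HasDerivAt (triangleGram a b) (2 * (a * b + 1) - 2 * x) x := by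
  have h := (((hasDerivAt_id x).const_mul (2 * (a * b + 1))).const_add
    (-(a + b) ^ 2)).sub (hasDerivAt_pow 2 x)
  exact h.congr_deriv (by simp)

theorem hasDerivAt_arctan_sqrt_triangleGram_div {a b x : ℝ} (hG : 0 < triangleGram a b x)
    (hu : a + b + x ≠ 0) :
    HasDerivAt (fun y => arctan (√(triangleGram a b y) / (a + b + y)))
      ((a + b - x) / √(triangleGram a b x) / (2 * x)) x := by
  have hD : HasDerivAt (fun y => √(triangleGram a b y))
      ((2 * (a * b + 1) - 2 * x) / (2 * √(triangleGram a b x))) x :=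
    (hasDerivAt_triangleGram a b x).sqrt hG.ne'
  have hu' : HasDerivAt (fun y => a + b + y) 1 x := (hasDerivAt_id x).const_add (a + b)
  refine ((hD.div hu' hu).arctan).congr_deriv ?_
  have hsq : √(triangleGram a b x) ^ 2 = triangleGram a b x := sq_sqrt hG.le
  have hD0 : √(triangleGram a b x) ≠ 0 := (sqrt_pos.2 hG).ne'
  have hsum := sq_add_triangleGram a b x
  have hx : x ≠ 0 := by rintro rfl; nlinarith [sq_nonneg (a + b)]
  simp only [Pi.div_apply]
  field_simp
  rw [hsq]
  linear_combination (-(a + b + x)) * hsum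

theorem sqrt_triangleGram_mul_eq {a b c d x : ℝ} (ha : a ≤ 1) (hb : b ≤ 1) (hc : c ≤ 1)
    (hd : d ≤ 1)
    (hx : (x - (a + b)) * √((1 - c) * (1 - d)) + (x - (c + d)) * √((1 - a) * (1 - b)) = 0) :
    √(triangleGram a b x) * √((1 - c) * (1 - d)) =
      √(triangleGram c d x) * √((1 - a) * (1 - b)) := by
  set s₁ := √((1 - a) * (1 - b))
  set s₂ := √((1 - c) * (1 - d))
  have hs₁ : s₁ ^ 2 = (1 - a) * (1 - b) := sq_sqrt (by nlinarith)
  have hs₂ : s₂ ^ 2 = (1 - c) * (1 - d) := sq_sqrt (by nlinarith)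
  have hs₁₀ : 0 ≤ s₁ := sqrt_nonneg _
  have hs₂₀ : 0 ≤ s₂ := sqrt_nonneg _
  have hGram : triangleGram a b x * s₂ ^ 2 = triangleGram c d x * s₁ ^ 2 := by
    rw [triangleGram_eq, triangleGram_eq, ← hs₁, ← hs₂]
    linear_combination ((x - (c + d)) * s₁ - (x - (a + b)) * s₂) * hx
  rw [← sqrt_sq hs₁₀, ← sqrt_sq hs₂₀, ← sqrt_mul' _ (sq_nonneg _), ← sqrt_mul' _ (sq_nonneg _),
    hGram]

theorem div_add_div_eq_zero_of_mul_eq {p q s₁ s₂ x D₁ D₂ : ℝ} (hs₁ : s₁ ≠ 0) (hD₁ : D₁ ≠ 0)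
    (hD₂ : D₂ ≠ 0) (hx : (x - p) * s₂ + (x - q) * s₁ = 0) (hD : D₁ * s₂ = D₂ * s₁) :
    (p - x) / D₁ + (q - x) / D₂ = 0 := by
  rw [div_add_div _ _ hD₁ hD₂, div_eq_zero_iff]
  left
  apply mul_left_cancel₀ hs₁
  linear_combination (x - p) * hD - D₁ * hx

theorem one_sub_cos_pos {ℓ : ℝ} (h₀ : 0 < ℓ) (h : ℓ < 2 * π) : 0 < 1 - cos ℓ := by
  have hne : cos ℓ ≠ 1 := fun h₁ =>
    h₀.ne' ((cos_eq_one_iff_of_lt_of_lt (by linarith [pi_pos]) h).1 h₁)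
  linarith [(cos_le_one ℓ).lt_of_ne hne]

/-- For spherical quadrilaterals with given side lengths `ℓ₁, ℓ₂, ℓ₃, ℓ₄`
(sufficiently small so that all quantities are defined), the area
`A(x) = 2(arctan(D₁/u₁) + arctan(D₂/u₂))`, viewed as a function of
`x = 1 + cos d` where `d` is the diagonal separating `{ℓ₁, ℓ₂}` from
`{ℓ₃, ℓ₄}`, has a critical point at
`x₀ = ((c₁+c₂)√((1-c₃)(1-c₄)) + (c₃+c₄)√((1-c₁)(1-c₂))) /
      (√((1-c₁)(1-c₂)) + √((1-c₃)(1-c₄)))`, `cᵢ = cos ℓᵢ`;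
moreover `D₁/D₂ = √((1-c₁)(1-c₂))/√((1-c₃)(1-c₄))` at `x₀`. -/
theorem spherical_quadrilateral_area_critical_point
    (ℓ₁ ℓ₂ ℓ₃ ℓ₄ : ℝ)
    (h₁ : ℓ₁ ∈ Ioo 0 (π / 2)) (h₂ : ℓ₂ ∈ Ioo 0 (π / 2))
    (h₃ : ℓ₃ ∈ Ioo 0 (π / 2)) (h₄ : ℓ₄ ∈ Ioo 0 (π / 2))
    (c₁ c₂ c₃ c₄ : ℝ)
    (hc₁ : c₁ = Real.cos ℓ₁) (hc₂ : c₂ = Real.cos ℓ₂)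
    (hc₃ : c₃ = Real.cos ℓ₃) (hc₄ : c₄ = Real.cos ℓ₄)
    (u₁ u₂ D₁ D₂ A : ℝ → ℝ)
    (hu₁ : ∀ x, u₁ x = c₁ + c₂ + x) (hu₂ : ∀ x, u₂ x = c₃ + c₄ + x)
    (hD₁ : ∀ x, D₁ x = Real.sqrt (-(c₁ + c₂) ^ 2 + 2 * (c₁ * c₂ + 1) * x - x ^ 2))
    (hD₂ : ∀ x, D₂ x = Real.sqrt (-(c₃ + c₄) ^ 2 + 2 * (c₃ * c₄ + 1) * x - x ^ 2))
    (hA : ∀ x, A x = 2 * (Real.arctan (D₁ x / u₁ x) + Real.arctan (D₂ x / u₂ x)))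
    (x₀ : ℝ)
    (hx₀ : x₀ = ((c₁ + c₂) * Real.sqrt ((1 - c₃) * (1 - c₄)) +
        (c₃ + c₄) * Real.sqrt ((1 - c₁) * (1 - c₂))) /
      (Real.sqrt ((1 - c₁) * (1 - c₂)) + Real.sqrt ((1 - c₃) * (1 - c₄))))
    (hD₁₀ : 0 < D₁ x₀) (hD₂₀ : 0 < D₂ x₀)
    (hu₁₀ : 0 < u₁ x₀) (hu₂₀ : 0 < u₂ x₀) :
    HasDerivAt A 0 x₀ ∧
    D₁ x₀ / D₂ x₀ =
      Real.sqrt ((1 - c₁) * (1 - c₂)) / Real.sqrt ((1 - c₃) * (1 - c₄)) := by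
  subst hc₁ hc₂ hc₃ hc₄
  replace hD₁ : ∀ x, D₁ x = √(triangleGram (cos ℓ₁) (cos ℓ₂) x) := hD₁
  replace hD₂ : ∀ x, D₂ x = √(triangleGram (cos ℓ₃) (cos ℓ₄) x) := hD₂
  have hcos : ∀ ℓ ∈ Ioo 0 (π / 2), 0 < 1 - cos ℓ := fun ℓ h =>
    one_sub_cos_pos h.1 (by linarith [h.2, pi_pos])
  set s₁ := √((1 - cos ℓ₁) * (1 - cos ℓ₂))
  set s₂ := √((1 - cos ℓ₃) * (1 - cos ℓ₄))
  have hs₁ : 0 < s₁ := sqrt_pos.2 (mul_pos (hcos ℓ₁ h₁) (hcos ℓ₂ h₂))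
  have hs₂ : 0 < s₂ := sqrt_pos.2 (mul_pos (hcos ℓ₃ h₃) (hcos ℓ₄ h₄))
  have hx : (x₀ - (cos ℓ₁ + cos ℓ₂)) * s₂ + (x₀ - (cos ℓ₃ + cos ℓ₄)) * s₁ = 0 := by
    rw [hx₀]; field_simp; ring
  have hD : D₁ x₀ * s₂ = D₂ x₀ * s₁ := by
    rw [hD₁, hD₂]
    exact sqrt_triangleGram_mul_eq (cos_le_one _) (cos_le_one _) (cos_le_one _) (cos_le_one _) hx
  refine ⟨?_, (div_eq_div_iff hD₂₀.ne' hs₂.ne').2 (hD.trans (mul_comm _ _))⟩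
  have hG₁ : 0 < triangleGram (cos ℓ₁) (cos ℓ₂) x₀ := sqrt_pos.1 (hD₁ x₀ ▸ hD₁₀)
  have hG₂ : 0 < triangleGram (cos ℓ₃) (cos ℓ₄) x₀ := sqrt_pos.1 (hD₂ x₀ ▸ hD₂₀)
  have hA' : A = fun x =>
      2 * (arctan (√(triangleGram (cos ℓ₁) (cos ℓ₂) x) / (cos ℓ₁ + cos ℓ₂ + x)) +
        arctan (√(triangleGram (cos ℓ₃) (cos ℓ₄) x) / (cos ℓ₃ + cos ℓ₄ + x))) :=
    funext fun x => by rw [hA, hD₁, hD₂, hu₁, hu₂]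
  rw [hA']
  refine (((hasDerivAt_arctan_sqrt_triangleGram_div hG₁ (hu₁ x₀ ▸ hu₁₀).ne').add
    (hasDerivAt_arctan_sqrt_triangleGram_div hG₂ (hu₂ x₀ ▸ hu₂₀).ne')).const_mul 2).congr_deriv ?_
  rw [← add_div, ← hD₁, ← hD₂, div_add_div_eq_zero_of_mul_eq hs₁.ne' hD₁₀.ne' hD₂₀.ne' hx hD,
    zero_div, mul_zero]
end

section
/- In a spherical triangle with sides a, b, c, semiperimeter s, the inradius r satisfies tan r = √(sin(s−a)·sin(s−b)·sin(s−c)/sin s). -/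
open Real Set

/-- Spherical inradius formula: in a nondegenerate spherical triangle with sides
`a, b, c`, semiperimeter `s = (a+b+c)/2 < π`, and inradius `r` characterized by
`tan r = sin(s-a) · tan(A/2)` where `A` is the angle opposite `a`, one has
`tan r = √(sin(s-a) sin(s-b) sin(s-c) / sin s)`. -/
theorem spherical_inradius_formula
    (a b c A s r : ℝ)
    (ha : a ∈ Ioo 0 π) (hb : b ∈ Ioo 0 π) (hc : c ∈ Ioo 0 π)
    (htri₁ : a < b + c) (htri₂ : b < a + c) (htri₃ : c < a + b)
    (hs : s = (a + b + c) / 2) (hsπ : s < π)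
    (hA : A ∈ Ioo 0 π)
    (lawA : Real.cos a = Real.cos b * Real.cos c + Real.sin b * Real.sin c * Real.cos A)
    (hr : Real.tan r = Real.sin (s - a) * Real.tan (A / 2)) :
    Real.tan r = Real.sqrt (Real.sin (s - a) * Real.sin (s - b) * Real.sin (s - c) / Real.sin s) := by
  obtain ⟨ha0, haπ⟩ := ha
  obtain ⟨hb0, hbπ⟩ := hb
  obtain ⟨hc0, hcπ⟩ := hc
  obtain ⟨hA0, hAπ⟩ := hA
  have hs0 : 0 < s := by rw [hs]; linarith
  have hsinS : 0 < Real.sin s := Real.sin_pos_of_pos_of_lt_pi hs0 hsπ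
  have hsa : 0 < s - a := by rw [hs]; linarith
  have hsaπ : s - a < π := by linarith
  have hsinSA : 0 < Real.sin (s - a) := Real.sin_pos_of_pos_of_lt_pi hsa hsaπ
  have hsb : 0 < s - b := by rw [hs]; linarith
  have hsinSB : 0 < Real.sin (s - b) := Real.sin_pos_of_pos_of_lt_pi hsb (by linarith)
  have hsc : 0 < s - c := by rw [hs]; linarith
  have hsinSC : 0 < Real.sin (s - c) := Real.sin_pos_of_pos_of_lt_pi hsc (by linarith)
  have hsinb : 0 < Real.sin b := Real.sin_pos_of_pos_of_lt_pi hb0 hbπ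
  have hsinc : 0 < Real.sin c := Real.sin_pos_of_pos_of_lt_pi hc0 hcπ
  have hcosA2 : 0 < Real.cos (A / 2) :=
    Real.cos_pos_of_mem_Ioo ⟨by linarith [Real.pi_pos], by linarith⟩
  have hsinA2 : 0 < Real.sin (A / 2) :=
    Real.sin_pos_of_pos_of_lt_pi (by linarith) (by linarith)
  have htan : 0 < Real.tan (A / 2) := by
    rw [Real.tan_eq_sin_div_cos]; positivity
  -- key identities
  have key1 : Real.sin b * Real.sin c * (1 - Real.cos A)
      = 2 * Real.sin (s - b) * Real.sin (s - c) := by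
    have hb' : b - c = (s - c) - (s - b) := by ring
    have ha' : a = (s - b) + (s - c) := by rw [hs]; ring
    have expand : Real.cos (b - c) - Real.cos a
        = 2 * Real.sin (s - b) * Real.sin (s - c) := by
      rw [hb', ha', Real.cos_sub, Real.cos_add]; ring
    rw [Real.cos_sub] at expand
    linear_combination expand + lawA
  have key2 : Real.sin b * Real.sin c * (1 + Real.cos A)
      = 2 * Real.sin s * Real.sin (s - a) := by
    have ha' : a = s - (s - a) := by ring
    have hbc : b + c = s + (s - a) := by rw [hs]; ring
    have expand : Real.cos a - Real.cos (b + c)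
        = 2 * Real.sin s * Real.sin (s - a) := by
      rw [ha', hbc, Real.cos_sub, Real.cos_add]; ring
    rw [Real.cos_add] at expand
    linear_combination expand - lawA
  -- tan(A/2)^2 = (1 - cos A) / (1 + cos A)
  have hcossq : Real.cos (A / 2) ^ 2 = (1 + Real.cos A) / 2 := by
    have := Real.cos_sq (A / 2)
    rw [show 2 * (A / 2) = A by ring] at this
    linarith
  have hsinsq : Real.sin (A / 2) ^ 2 = (1 - Real.cos A) / 2 := by
    have := Real.sin_sq_add_cos_sq (A / 2)
    linarith
  have h1pc : 0 < 1 + Real.cos A := by nlinarith [hcossq, hcosA2]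
  have htansq : Real.tan (A / 2) ^ 2 = (1 - Real.cos A) / (1 + Real.cos A) := by
    rw [Real.tan_eq_sin_div_cos, div_pow, hsinsq, hcossq]
    field_simp
  have htr : 0 ≤ Real.tan r := by
    rw [hr]; positivity
  have h3 : Real.sin b * Real.sin c *
        (Real.sin (s - a) ^ 2 * (1 - Real.cos A) * Real.sin s)
      = Real.sin b * Real.sin c *
        (Real.sin (s - a) * Real.sin (s - b) * Real.sin (s - c) * (1 + Real.cos A)) := by
    linear_combination (Real.sin (s - a) ^ 2 * Real.sin s) * key1
      - (Real.sin (s - a) * Real.sin (s - b) * Real.sin (s - c)) * key2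
  have final : Real.sin (s - a) ^ 2 * (1 - Real.cos A) * Real.sin s
      = Real.sin (s - a) * Real.sin (s - b) * Real.sin (s - c) * (1 + Real.cos A) :=
    mul_left_cancel₀ (by positivity) h3
  have hsq : Real.tan r ^ 2
      = Real.sin (s - a) * Real.sin (s - b) * Real.sin (s - c) / Real.sin s := by
    rw [hr, mul_pow, htansq, mul_div_assoc', div_eq_div_iff (ne_of_gt h1pc) (ne_of_gt hsinS)]
    linear_combination final
  rw [← hsq, Real.sqrt_sq htr]
end
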